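/- For a Hermitian matrix H with ‖H‖ ≤ 1, the unitary dilation satisfies [[H, √(I−H²)], [√(I−H²), −H]] = (σ_z ⊗ I) · exp(i σ_y ⊗ arccos(H)), where arccos is applied via the functional calculus. -/

import Mathlib

/-!
Write `J = [[0, 1], [-1, 0]]`. The exponent is `J ⊗ C`, and the constant matrix
`[[1, 1], [i, -i]] ⊗ 1` conjugates it to `diag(iC, -iC)`, so
`exp (J ⊗ C) = [[cos C, sin C], [-sin C, cos C]]` with `cos`, `sin` defined through `exp (±iC)`.
Diagonalising `H` gives `cos C = H`. Since `sin (arccos x) ≥ 0`, `sin C` is positive semidefinite,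
and `sin² + cos² = 1` makes it a square root of `1 - H²`; by uniqueness of positive square roots
it is `S`. Left multiplication by `σ_z ⊗ 1` negates the second block row.
-/

open Matrix NormedSpace
open Complex (I)
open scoped ComplexOrder

namespace Matrix

variable {m n : Type*} [Fintype m] [DecidableEq m] [Fintype n] [DecidableEq n]

def fromBlocksRingHom : Matrix m m ℂ × Matrix n n ℂ →+* Matrix (m ⊕ n) (m ⊕ n) ℂ where
  toFun p := fromBlocks p.1 0 0 p.2
  map_one' := fromBlocks_one
  map_mul' p q := by simp [fromBlocks_multiply]
  map_zero' := fromBlocks_zero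
  map_add' p q := by simp [fromBlocks_add]

theorem exp_fromBlocks_zero_zero (A : Matrix m m ℂ) (B : Matrix n n ℂ) :
    exp (fromBlocks A 0 0 B) = fromBlocks (exp A) 0 0 (exp B) := by
  open scoped Norms.Operator in
  have h := map_exp fromBlocksRingHom
    (continuous_fst.matrix_fromBlocks continuous_const continuous_const continuous_snd) (A, B)
  simp only [fromBlocksRingHom, RingHom.coe_mk, MonoidHom.coe_mk, OneHom.coe_mk,
    Prod.fst_exp, Prod.snd_exp] at h
  -- `h` carries the topology of the operator norm, which is only defeq to the product topology
  convert h.symm using 2 <;> rfl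

noncomputable def cos (A : Matrix m m ℂ) : Matrix m m ℂ :=
  (2 : ℂ)⁻¹ • (exp (I • A) + exp (-I • A))

noncomputable def sin (A : Matrix m m ℂ) : Matrix m m ℂ :=
  (2 : ℂ)⁻¹ • I • (exp (-I • A) - exp (I • A))

theorem sin_mul_self_add_cos_mul_self (A : Matrix m m ℂ) :
    sin A * sin A + cos A * cos A = 1 := by
  have h : Commute (I • A) (-I • A) := ((Commute.refl A).smul_left _).smul_right _
  have hEF : exp (I • A) * exp (-I • A) = 1 := by
    rw [← exp_add_of_commute _ _ h, ← add_smul, add_neg_cancel, zero_smul, exp_zero]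
  have hFE : exp (-I • A) * exp (I • A) = 1 := by
    rw [← exp_add_of_commute _ _ h.symm, ← add_smul, neg_add_cancel, zero_smul, exp_zero]
  simp only [sin, cos, smul_mul_smul_comm, sub_mul, mul_sub, add_mul, mul_add, hEF, hFE,
    smul_smul]
  match_scalars <;> ring_nf <;> norm_num

theorem exp_fromBlocks_zero_neg (A : Matrix m m ℂ) :
    exp (fromBlocks 0 A (-A) 0) = fromBlocks (cos A) (sin A) (-sin A) (cos A) := by
  -- `[[1, 1], [i, -i]]` is the eigenvector matrix of `J`, with eigenvalues `i` and `-i`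
  set P : Matrix (m ⊕ m) (m ⊕ m) ℂ := fromBlocks 1 1 (I • 1) (-I • 1)
  set Q : Matrix (m ⊕ m) (m ⊕ m) ℂ := (2 : ℂ)⁻¹ • fromBlocks 1 (-I • 1) 1 (I • 1)
  have hconj (X Y : Matrix m m ℂ) : P * fromBlocks X 0 0 Y * Q =
      (2 : ℂ)⁻¹ • fromBlocks (X + Y) (I • (Y - X)) (I • (X - Y)) (X + Y) := by
    simp only [P, Q, fromBlocks_multiply, fromBlocks_smul, Matrix.mul_smul, Matrix.smul_mul,
      Matrix.mul_one, Matrix.one_mul, Matrix.mul_zero, add_zero, zero_add]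
    congr 1 <;> match_scalars <;> ring_nf <;> norm_num
  have hPQ : P * Q = 1 :=
    calc P * Q = P * fromBlocks 1 0 0 1 * Q := by rw [fromBlocks_one, Matrix.mul_one]
      _ = 1 := by
        rw [hconj, fromBlocks_smul, ← fromBlocks_one]
        congr 1 <;> module
  have hA : fromBlocks 0 A (-A) 0 = P * fromBlocks (I • A) 0 0 (-I • A) * P⁻¹ := by
    rw [inv_eq_right_inv hPQ, hconj, fromBlocks_smul]
    congr 1 <;> match_scalars <;> ring_nf <;> norm_num
  have hP : IsUnit P := (isUnit_iff_isUnit_det P).mpr (isUnit_det_of_right_inverse hPQ)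
  rw [hA, exp_conj _ _ hP, exp_fromBlocks_zero_zero, inv_eq_right_inv hPQ, hconj, fromBlocks_smul,
    cos, sin]
  congr 1
  module

theorem exp_conjStarAlgAut (U : unitary (Matrix m m ℂ)) (A : Matrix m m ℂ) :
    exp (Unitary.conjStarAlgAut ℂ _ U A) = Unitary.conjStarAlgAut ℂ _ U (exp A) := by
  simpa using exp_units_conj (Unitary.toUnits U) A

theorem cos_conjStarAlgAut (U : unitary (Matrix m m ℂ)) (A : Matrix m m ℂ) :
    cos (Unitary.conjStarAlgAut ℂ _ U A) = Unitary.conjStarAlgAut ℂ _ U (cos A) := by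
  simp only [cos, ← map_smul, exp_conjStarAlgAut, ← map_add]

theorem sin_conjStarAlgAut (U : unitary (Matrix m m ℂ)) (A : Matrix m m ℂ) :
    sin (Unitary.conjStarAlgAut ℂ _ U A) = Unitary.conjStarAlgAut ℂ _ U (sin A) := by
  simp only [sin, ← map_smul, exp_conjStarAlgAut, ← map_sub]

theorem cos_diagonal (d : m → ℂ) :
    cos (diagonal d) = diagonal (fun i => Complex.cos (d i)) := by
  rw [cos, ← diagonal_smul, ← diagonal_smul, exp_diagonal, exp_diagonal, diagonal_add,
    ← diagonal_smul]
  congr 1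
  funext i
  simp only [Pi.smul_apply, Pi.coe_exp, smul_eq_mul, Complex.exp_eq_exp_ℂ, Complex.cos]
  ring_nf

theorem sin_diagonal (d : m → ℂ) :
    sin (diagonal d) = diagonal (fun i => Complex.sin (d i)) := by
  rw [sin, ← diagonal_smul, ← diagonal_smul, exp_diagonal, exp_diagonal, diagonal_sub,
    ← diagonal_smul, ← diagonal_smul]
  congr 1
  funext i
  simp only [Pi.smul_apply, Pi.coe_exp, smul_eq_mul, Complex.exp_eq_exp_ℂ, Complex.sin]
  ring_nf

section RCLike

variable {𝕜 : Type*} [RCLike 𝕜]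

theorem IsHermitian.abs_eigenvalues_le {A : Matrix m m 𝕜} (hA : A.IsHermitian) {c : ℝ}
    (hc : ∀ x : EuclideanSpace 𝕜 m, ‖toEuclideanLin A x‖ ≤ c * ‖x‖) (i : m) :
    |hA.eigenvalues i| ≤ c := by
  have h := hc (hA.eigenvectorBasis i)
  have hv :
      toEuclideanLin A (hA.eigenvectorBasis i) = hA.eigenvalues i • hA.eigenvectorBasis i := by
    rw [toLpLin_apply, hA.mulVec_eigenvectorBasis]
    rfl
  rwa [hv, norm_smul, hA.eigenvectorBasis.orthonormal.1 i, mul_one, mul_one,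
    Real.norm_eq_abs] at h

theorem PosSemidef.eq_of_mul_self_eq {A B : Matrix m m 𝕜} (hA : A.PosSemidef) (hB : B.PosSemidef)
    (h : A * A = B * B) : A = B := by
  open scoped MatrixOrder Matrix.Norms.L2Operator in
  exact (CFC.sq_eq_sq_iff A B hA.nonneg hB.nonneg).mp (by rw [sq, sq, h])

end RCLike

namespace IsHermitian

variable {H : Matrix m m ℂ} (hH : H.IsHermitian)

noncomputable def arccos : Matrix m m ℂ :=
  Unitary.conjStarAlgAut ℂ _ hH.eigenvectorUnitary
    (diagonal fun i => (Real.arccos (hH.eigenvalues i) : ℂ))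

theorem cos_arccos (hev : ∀ i, |hH.eigenvalues i| ≤ 1) : cos hH.arccos = H := by
  rw [arccos, cos_conjStarAlgAut, cos_diagonal]
  conv_rhs => rw [hH.spectral_theorem]
  congr 2
  funext i
  rw [Function.comp_apply, ← Complex.ofReal_cos,
    Real.cos_arccos (abs_le.mp (hev i)).1 (abs_le.mp (hev i)).2, RCLike.ofReal_eq_complex_ofReal]

theorem posSemidef_sin_arccos : (sin hH.arccos).PosSemidef := by
  rw [arccos, sin_conjStarAlgAut, sin_diagonal, Unitary.conjStarAlgAut_apply,
    star_eq_conjTranspose]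
  refine (posSemidef_diagonal_iff.mpr fun i => ?_).mul_mul_conjTranspose_same _
  rw [← Complex.ofReal_sin, Complex.zero_le_real]
  exact Real.sin_nonneg_of_nonneg_of_le_pi (Real.arccos_nonneg _) (Real.arccos_le_pi _)

end IsHermitian

end Matrix

/-- For a Hermitian matrix `H` with `‖H‖ ≤ 1`, with `S = √(I − H²)` the PSD square
root and `C = arccos(H)` defined by the spectral functional calculus, the unitary
dilation satisfies `[[H, S], [S, −H]] = (σ_z ⊗ I) · exp(i σ_y ⊗ C)`. -/
theorem stmt14 {n : ℕ} (H : Matrix (Fin n) (Fin n) ℂ) (hH : H.IsHermitian)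
    (hnorm : ∀ x : EuclideanSpace ℂ (Fin n), ‖Matrix.toEuclideanLin H x‖ ≤ ‖x‖)
    (S : Matrix (Fin n) (Fin n) ℂ) (hS : S.PosSemidef) (hS2 : S * S = 1 - H * H)
    (C : Matrix (Fin n) (Fin n) ℂ)
    (hC : C = (hH.eigenvectorUnitary : Matrix (Fin n) (Fin n) ℂ) *
      Matrix.diagonal (fun i => (Real.arccos (hH.eigenvalues i) : ℂ)) *
      star (hH.eigenvectorUnitary : Matrix (Fin n) (Fin n) ℂ)) :
    Matrix.fromBlocks H S S (-H) =
      Matrix.fromBlocks (1 : Matrix (Fin n) (Fin n) ℂ) 0 0 (-1) *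
        NormedSpace.exp
          (Complex.I • Matrix.fromBlocks 0 ((-Complex.I) • C) (Complex.I • C) 0) := by
  have hev i : |hH.eigenvalues i| ≤ 1 := hH.abs_eigenvalues_le (by simpa using hnorm) i
  replace hC : C = hH.arccos := hC
  have hcos : cos C = H := hC ▸ hH.cos_arccos hev
  have hsin : sin C = S := by
    refine PosSemidef.eq_of_mul_self_eq (hC ▸ hH.posSemidef_sin_arccos) hS ?_
    rw [hS2, ← hcos, ← sin_mul_self_add_cos_mul_self C, add_sub_cancel_right]
  have hexp : I • fromBlocks 0 ((-I) • C) (I • C) 0 = fromBlocks 0 C (-C) 0 := by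
    simp [fromBlocks_smul, smul_smul]
  rw [hexp, exp_fromBlocks_zero_neg, fromBlocks_multiply, hcos, hsin]
  simp
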